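/- arXiv:0801.4040 — 2 statements merged into one kernel-verified Lean document; each statement's English description precedes it below -/
import Mathlib

section
/- For all real x ≥ 1 and all integers l ≥ 1, the sum over m ≥ 1 of binomial(m+l-1, l) · x^m / m! is at most (4x)^l · e^x. -/
/-!
By Vandermonde, `C(n + m, k) = ∑_{i + j = k} C(n, i) C(m, j)`, and
`∑_m C(m, j) x^m / m! = x^j / j! · e^x`. Hence with `n = l - 1` the series equals
`e^x ∑_{i + j = l} C(l - 1, i) x^j / j!` exactly (its `m = 0` term `C(l - 1, l)` vanishes), and for
`x ≥ 1` each `x^j / j!` is at most `x^l` while the binomial coefficients sum to at most `2^(l-1)`.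
-/

open Finset Real
open scoped Nat

theorem hasSum_choose_mul_pow_div_factorial (x : ℝ) (j : ℕ) :
    HasSum (fun m : ℕ => (m.choose j : ℝ) * x ^ m / m !) (x ^ j / j ! * exp x) := by
  refine (hasSum_nat_add_iff' j).mp ?_
  have hlow : ∑ m ∈ range j, (m.choose j : ℝ) * x ^ m / m ! = 0 :=
    sum_eq_zero fun m hm => by rw [Nat.choose_eq_zero_of_lt (mem_range.mp hm)]; simp
  rw [hlow, sub_zero, Real.exp_eq_exp_ℝ]
  convert! (NormedSpace.expSeries_div_hasSum_exp x).mul_left (x ^ j / j !) using 2 with i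
  have hfac := Nat.add_choose_mul_factorial_mul_factorial i j
  rw [pow_add]
  field_simp
  rw [← hfac]
  push_cast
  ring

theorem hasSum_add_choose_mul_pow_div_factorial (x : ℝ) (n k : ℕ) :
    HasSum (fun m : ℕ => ((n + m).choose k : ℝ) * x ^ m / m !)
      ((∑ p ∈ antidiagonal k, (n.choose p.1 : ℝ) * (x ^ p.2 / p.2 !)) * exp x) := by
  simp_rw [Nat.add_choose_eq, Nat.cast_sum, sum_mul, sum_div, Nat.cast_mul, mul_assoc,
    mul_div_assoc]
  refine hasSum_sum fun p _ => HasSum.mul_left _ ?_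
  simpa only [mul_div_assoc] using hasSum_choose_mul_pow_div_factorial x p.2

theorem sum_antidiagonal_choose_fst_le (n k : ℕ) : ∑ p ∈ antidiagonal k, n.choose p.1 ≤ 2 ^ n := by
  rw [Nat.sum_antidiagonal_eq_sum_range_succ_mk, ← Nat.sum_range_choose n]
  refine sum_le_sum_of_ne_zero fun i _ hi => mem_range.mpr ?_
  by_contra! h
  exact hi (Nat.choose_eq_zero_of_lt (by omega))

theorem pow_div_factorial_le_pow {x : ℝ} (hx : 1 ≤ x) {i k : ℕ} (hik : i ≤ k) :
    x ^ i / i ! ≤ x ^ k :=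
  (div_le_self (by positivity) (by exact_mod_cast Nat.factorial_pos i)).trans
    (pow_le_pow_right₀ hx hik)

theorem sum_antidiagonal_choose_mul_pow_div_factorial_le {x : ℝ} (hx : 1 ≤ x) (n k : ℕ) :
    ∑ p ∈ antidiagonal k, (n.choose p.1 : ℝ) * (x ^ p.2 / p.2 !) ≤ 2 ^ n * x ^ k :=
  calc ∑ p ∈ antidiagonal k, (n.choose p.1 : ℝ) * (x ^ p.2 / p.2 !)
      ≤ ∑ p ∈ antidiagonal k, (n.choose p.1 : ℝ) * x ^ k := by
        refine sum_le_sum fun p hp => mul_le_mul_of_nonneg_left ?_ (by positivity)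
        exact pow_div_factorial_le_pow hx (by rw [HasAntidiagonal.mem_antidiagonal] at hp; omega)
    _ ≤ 2 ^ n * x ^ k := by
        rw [← sum_mul]
        gcongr
        exact_mod_cast sum_antidiagonal_choose_fst_le n k

/-- For all real `x ≥ 1` and integers `l ≥ 1`,
`∑_{m ≥ 1} C(m+l-1, l) x^m / m! ≤ (4x)^l e^x`. -/
theorem stmt0 (x : ℝ) (hx : 1 ≤ x) (l : ℕ) (hl : 1 ≤ l) :
    (∑' m : ℕ, (Nat.choose (m + 1 + l - 1) l : ℝ) * x ^ (m + 1) / (Nat.factorial (m + 1)))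
      ≤ (4 * x) ^ l * Real.exp x := by
  have hsum := (hasSum_nat_add_iff' 1).mpr (hasSum_add_choose_mul_pow_div_factorial x (l - 1) l)
  simp only [range_one, sum_singleton, add_zero, Nat.choose_eq_zero_of_lt (by omega : l - 1 < l),
    CharP.cast_eq_zero, zero_mul, zero_div, sub_zero] at hsum
  have hindex (m : ℕ) : m + 1 + l - 1 = l - 1 + (m + 1) := by omega
  simp only [hindex, hsum.tsum_eq]
  calc _ ≤ 2 ^ (l - 1) * x ^ l * exp x := by
        gcongr
        exact sum_antidiagonal_choose_mul_pow_div_factorial_le hx (l - 1) l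
    _ ≤ (4 * x) ^ l * exp x := by
        rw [mul_pow]
        gcongr
        calc (2 : ℝ) ^ (l - 1) ≤ 2 ^ l := pow_le_pow_right₀ (by norm_num) (by omega)
          _ ≤ 4 ^ l := pow_le_pow_left₀ (by norm_num) (by norm_num) l
end

section
/- For k > 2·log₂ n, the probability that the longest carry-propagation chain in the addition of two independent uniform n-bit integers has length at least k is at most (n-k+1)/2^{k+1} ≤ 1/(2n). -/
/-!
An active `k`-block at position `l` pins down `k + 1` of the `2n` bits of a pair: both bits at `l`,
and the `k - 1` bits of the second number above `l`, which are the complements of those of the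
first. Deleting these bits is injective on such pairs, so at most a `1 / 2 ^ (k + 1)` fraction of
the pairs has an active block at `l`. A chain of length at least `k` needs an active block at one
of at most `n - k + 1` positions, and the union bound gives the first inequality. The second is
`(n - k + 1) * 2n ≤ 2n² < 2 ^ (k + 1)`, which is where `k > 2 log₂ n` enters.
-/

open Finset

/-- `x` with its bits `l, …, l + s - 1` deleted and the higher bits shifted down. -/
def dropBits (l s x : ℕ) : ℕ := 2 ^ l * (x / 2 ^ (l + s)) + x % 2 ^ l

lemma testBit_dropBits (l s x j : ℕ) :
    (dropBits l s x).testBit j = if j < l then x.testBit j else x.testBit (j + s) := by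
  rw [dropBits, Nat.testBit_two_pow_mul_add _ (Nat.mod_lt _ (by positivity))]
  split_ifs with hj
  · simp [Nat.testBit_mod_two_pow, hj]
  · rw [Nat.testBit_div_two_pow]
    congr 1
    omega

lemma dropBits_lt {l s n x : ℕ} (hls : l + s ≤ n) (hx : x < 2 ^ n) :
    dropBits l s x < 2 ^ (n - s) := by
  refine Nat.lt_pow_two_of_testBit _ fun j hj => ?_
  rw [testBit_dropBits, if_neg (by omega)]
  exact Nat.testBit_lt_two_pow (hx.trans_le (Nat.pow_le_pow_right two_pos (by omega)))

lemma eq_of_dropBits_eq {l s x y : ℕ} (h : dropBits l s x = dropBits l s y)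
    (hbits : ∀ i < s, x.testBit (l + i) = y.testBit (l + i)) : x = y := by
  have hdrop (j : ℕ) := congrArg (Nat.testBit · j) h
  simp only [testBit_dropBits] at hdrop
  refine Nat.eq_of_testBit_eq fun i => ?_
  by_cases hil : i < l
  · simpa [hil] using hdrop i
  by_cases his : i < l + s
  · simpa [show l + (i - l) = i by omega] using hbits (i - l) (by omega)
  · simpa [show ¬i - s < l by omega, show i - s + s = i by omega] using hdrop (i - s)

/-- The bits `l, …, l + k - 1` of `p.1` and `p.2` form an active `k`-block: a carry is generated at
bit `l` (both bits are `1`) and propagated through the next `k - 1` bits (the bits differ). -/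
def IsActiveBlock (k l : ℕ) (p : ℕ × ℕ) : Prop :=
  p.1.testBit l = true ∧ p.2.testBit l = true ∧
    ∀ i ∈ Ico 1 k, p.1.testBit (l + i) ≠ p.2.testBit (l + i)

instance (k l : ℕ) : DecidablePred (IsActiveBlock k l) := fun _ =>
  inferInstanceAs (Decidable (_ ∧ _ ∧ _))

lemma IsActiveBlock.testBit_snd_eq {k l : ℕ} {p : ℕ × ℕ} (h : IsActiveBlock k l p) {i : ℕ}
    (hi : i < k) : p.2.testBit (l + i) = if i = 0 then true else !p.1.testBit (l + i) := by
  obtain ⟨-, h₂, hprop⟩ := h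
  split_ifs with hi0
  · simpa [hi0] using h₂
  · exact Bool.eq_not_of_ne (hprop i (mem_Ico.2 ⟨by omega, hi⟩)).symm

lemma card_filter_isActiveBlock_le {n k l : ℕ} (hk : 0 < k) (hlk : l + k ≤ n) :
    #{p ∈ range (2 ^ n) ×ˢ range (2 ^ n) | IsActiveBlock k l p} ≤ 2 ^ (n - 1) * 2 ^ (n - k) := by
  rw [← card_range (2 ^ (n - 1)), ← card_range (2 ^ (n - k)), ← card_product]
  refine card_le_card_of_injOn (fun p => (dropBits l 1 p.1, dropBits l k p.2)) ?_ ?_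
  · rintro ⟨x, y⟩ hp
    simp only [mem_coe, mem_filter, mem_product, mem_range] at hp ⊢
    exact ⟨dropBits_lt (by omega) hp.1.1, dropBits_lt hlk hp.1.2⟩
  · rintro ⟨x₁, y₁⟩ hp₁ ⟨x₂, y₂⟩ hp₂ heq
    simp only [mem_coe, mem_filter, Prod.mk.injEq] at hp₁ hp₂ heq
    have hx : x₁ = x₂ := eq_of_dropBits_eq heq.1 fun i hi => by
      obtain rfl : i = 0 := by omega
      exact hp₁.2.1.trans hp₂.2.1.symm
    refine Prod.ext hx (eq_of_dropBits_eq heq.2 fun i hi => ?_)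
    rw [hp₁.2.testBit_snd_eq hi, hp₂.2.testBit_snd_eq hi, hx]

lemma card_filter_isActiveBlock_mul_le {n k l : ℕ} (hk : 0 < k) (hlk : l + k ≤ n) :
    #{p ∈ range (2 ^ n) ×ˢ range (2 ^ n) | IsActiveBlock k l p} * 2 ^ (k + 1)
      ≤ 2 ^ n * 2 ^ n := by
  calc _ ≤ 2 ^ (n - 1) * 2 ^ (n - k) * 2 ^ (k + 1) :=
        Nat.mul_le_mul_right _ (card_filter_isActiveBlock_le hk hlk)
    _ = 2 ^ n * 2 ^ n := by rw [← pow_add, ← pow_add, ← pow_add]; congr 1; omega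

lemma card_filter_exists_isActiveBlock_mul_le {n k : ℕ} (hk : 0 < k) :
    #{p ∈ range (2 ^ n) ×ˢ range (2 ^ n) |
        ∃ l ∈ range (n + 1), l + k ≤ n ∧ IsActiveBlock k l p} * 2 ^ (k + 1)
      ≤ (n - k + 1) * (2 ^ n * 2 ^ n) := by
  set blocks := {l ∈ range (n + 1) | l + k ≤ n}
  have hblocks : #blocks ≤ n - k + 1 := by
    rw [← card_range (n - k + 1)]
    exact card_le_card fun l hl => by simp [blocks] at hl ⊢; omega
  have hunion : {p ∈ range (2 ^ n) ×ˢ range (2 ^ n) |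
        ∃ l ∈ range (n + 1), l + k ≤ n ∧ IsActiveBlock k l p} ⊆
      blocks.biUnion fun l => {p ∈ range (2 ^ n) ×ˢ range (2 ^ n) | IsActiveBlock k l p} := by
    intro p hp
    obtain ⟨hp, l, hl, hlk, hact⟩ := mem_filter.1 hp
    exact mem_biUnion.2 ⟨l, mem_filter.2 ⟨hl, hlk⟩, mem_filter.2 ⟨hp, hact⟩⟩
  calc _ ≤ (∑ l ∈ blocks, #{p ∈ range (2 ^ n) ×ˢ range (2 ^ n) | IsActiveBlock k l p})
          * 2 ^ (k + 1) :=
        Nat.mul_le_mul_right _ ((card_le_card hunion).trans card_biUnion_le)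
    _ ≤ #blocks * (2 ^ n * 2 ^ n) := by
        rw [sum_mul]
        exact sum_le_card_nsmul _ _ _ fun l hl =>
          card_filter_isActiveBlock_mul_le hk (mem_filter.1 hl).2
    _ ≤ (n - k + 1) * (2 ^ n * 2 ^ n) := Nat.mul_le_mul_right _ hblocks

lemma sq_lt_two_pow_of_two_mul_logb_lt {n k : ℕ} (hn : 0 < n)
    (h : 2 * Real.logb 2 n < k) : n ^ 2 < 2 ^ k := by
  have : Real.logb 2 ((n : ℝ) ^ 2) < k := by rwa [Real.logb_pow, Nat.cast_ofNat]
  rw [Real.logb_lt_iff_lt_rpow one_lt_two (by positivity), Real.rpow_natCast] at this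
  exact_mod_cast this

lemma sub_add_one_mul_le_two_pow {n k : ℕ} (hn : 0 < n) (hk : 0 < k) (h : n ^ 2 < 2 ^ k) :
    (n - k + 1) * n ≤ 2 ^ k :=
  calc (n - k + 1) * n ≤ n * n := Nat.mul_le_mul_right _ (by omega)
    _ ≤ 2 ^ k := by rw [← sq]; exact h.le

/-- For `k > 2 log₂ n`, the probability that the longest carry-propagation chain in the
addition of two independent uniform `n`-bit integers has length at least `k` is at most
`(n-k+1)/2^(k+1)`, which is at most `1/(2n)`.  (Here `n - k` is truncated subtraction.) -/
theorem stmt9 (n k : ℕ) (hn : 1 ≤ n) (hk : 1 ≤ k)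
    (hklarge : 2 * Real.logb 2 n < (k : ℝ)) :
    (Finset.card (((Finset.range (2 ^ n)) ×ˢ (Finset.range (2 ^ n))).filter (by exact (fun p =>
        ∃ l ∈ Finset.range (n + 1), l + k ≤ n ∧
          Nat.testBit p.1 l = true ∧ Nat.testBit p.2 l = true ∧
          ∀ i ∈ Finset.Ico 1 k, Nat.testBit p.1 (l + i) ≠ Nat.testBit p.2 (l + i)))) : ℝ)
      / ((2 ^ n) * (2 ^ n)) ≤ ((n - k : ℕ) + 1 : ℝ) / 2 ^ (k + 1) ∧
    ((n - k : ℕ) + 1 : ℝ) / 2 ^ (k + 1) ≤ 1 / (2 * n) := by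
  have hsq := sq_lt_two_pow_of_two_mul_logb_lt hn hklarge
  have hmul : (((n - k : ℕ) : ℝ) + 1) * n ≤ 2 ^ k := by
    exact_mod_cast sub_add_one_mul_le_two_pow hn hk hsq
  constructor
  · rw [div_le_div_iff₀ (by positivity) (by positivity)]
    exact_mod_cast card_filter_exists_isActiveBlock_mul_le hk
  · rw [div_le_div_iff₀ (by positivity) (by positivity), pow_succ]
    linarith
end
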